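/- arXiv:1502.05744 — 8 statements merged into one kernel-verified Lean document; each statement's English description precedes it below -/
import Mathlib

section
/- Let C ≥ 0 and a_1, ..., a_T ≥ 0 be real numbers. Then the sum over t = 1 to T of min(a_t² / sqrt(sum_{s=1}^{t-1} a_s²), C·a_t) is at most 3.5·C·max_{t≤T} a_t + 3.5·sqrt(sum_{t=1}^T a_t²). (By convention the term with t such that sum_{s=1}^{t-1} a_s² = 0 is interpreted as min of C·a_t with +∞, i.e., equals C·a_t.) -/
set_option maxHeartbeats 1000000


/-- Useful inequality (Lemma 4 in the paper). `M` is any upper bound on the `a t`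
(in particular the maximum `max_{t<T} a t`). The term with zero prefix sum is
interpreted as `C * a t` (min with `+∞`). -/
theorem useful_inequality (T : ℕ) (C M : ℝ) (a : ℕ → ℝ)
    (hC : 0 ≤ C) (hM : 0 ≤ M) (ha : ∀ t, 0 ≤ a t)
    (hmax : ∀ t < T, a t ≤ M) :
    ∑ t ∈ Finset.range T,
      (if (∑ s ∈ Finset.range t, (a s) ^ 2) = 0 then C * a t
       else min ((a t) ^ 2 / Real.sqrt (∑ s ∈ Finset.range t, (a s) ^ 2)) (C * a t))
    ≤ 3.5 * C * M + 3.5 * Real.sqrt (∑ t ∈ Finset.range T, (a t) ^ 2) := by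
  classical
  set S : ℕ → ℝ := fun t => ∑ s ∈ Finset.range t, (a s) ^ 2 with hSdef
  have hSnn : ∀ t, 0 ≤ S t := fun t => Finset.sum_nonneg fun i _ => sq_nonneg _
  have hSsucc : ∀ t, S (t + 1) = S t + (a t) ^ 2 := fun t => Finset.sum_range_succ _ _
  set f : ℕ → ℝ := fun t => Real.sqrt (S t) with hfdef
  have hfnn : ∀ t, 0 ≤ f t := fun t => Real.sqrt_nonneg _
  have hfsq : ∀ t, (f t) ^ 2 = S t := fun t => Real.sq_sqrt (hSnn t)
  have hfmono : ∀ t, f t ≤ f (t + 1) := by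
    intro t
    exact Real.sqrt_le_sqrt (by rw [hSsucc]; nlinarith [sq_nonneg (a t)])
  set s3 := Real.sqrt 3 with hs3def
  set s2 := Real.sqrt 2 with hs2def
  have hs3 : s3 ^ 2 = 3 := Real.sq_sqrt (by norm_num)
  have hs2 : s2 ^ 2 = 2 := Real.sq_sqrt (by norm_num)
  have hs3nn : 0 ≤ s3 := Real.sqrt_nonneg _
  have hs2nn : 0 ≤ s2 := Real.sqrt_nonneg _
  have hs3b : s3 ≤ 1.75 := by nlinarith
  have hs3lb : 1 ≤ s3 := by nlinarith
  have hs2lb : 1.4 ≤ s2 := by nlinarith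
  -- per-term bound
  have key : ∀ t, (if S t = 0 then C * a t
        else min ((a t) ^ 2 / f t) (C * a t))
      ≤ 2 * s3 * (f (t + 1) - f t) + (if 2 * S t < (a t) ^ 2 then C * a t else 0) := by
    intro t
    have hDnn : 0 ≤ f (t + 1) - f t := sub_nonneg.mpr (hfmono t)
    by_cases hbad : 2 * S t < (a t) ^ 2
    · -- bad case: bound by C * a t
      rw [if_pos hbad]
      have h1 : (if S t = 0 then C * a t
          else min ((a t) ^ 2 / f t) (C * a t)) ≤ C * a t := by
        split
        · exact le_rfl
        · exact min_le_right _ _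
      have h2 : 0 ≤ 2 * s3 * (f (t + 1) - f t) := by positivity
      linarith
    · -- good case
      rw [if_neg hbad]
      push_neg at hbad
      by_cases hz : S t = 0
      · rw [if_pos hz]
        have ha0 : a t = 0 := by
          have h := ha t
          have : (a t) ^ 2 ≤ 0 := by rw [hz] at hbad; linarith
          nlinarith
        rw [ha0]
        have h2 : 0 ≤ 2 * s3 * (f (t + 1) - f t) := by positivity
        linarith
      · rw [if_neg hz]
        have hu : 0 < f t := Real.sqrt_pos.mpr (lt_of_le_of_ne (hSnn t) (Ne.symm hz))
        have hv2 : (f (t + 1)) ^ 2 = (f t) ^ 2 + (a t) ^ 2 := by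
          rw [hfsq, hfsq, hSsucc]
        have huv : f t ≤ f (t + 1) := hfmono t
        -- f (t+1) ≤ s3 * f t  since  S (t+1) ≤ 3 * S t
        have hvle : f (t + 1) ≤ s3 * f t := by
          have h : S (t + 1) ≤ 3 * S t := by rw [hSsucc]; linarith
          calc f (t + 1) ≤ Real.sqrt (3 * S t) := Real.sqrt_le_sqrt h
            _ = s3 * f t := Real.sqrt_mul (by norm_num) _
        have hgoal : (a t) ^ 2 / f t ≤ 2 * s3 * (f (t + 1) - f t) := by
          rw [div_le_iff₀ hu]
          have h3 : (f (t + 1) - f t) * (f (t + 1) + f t) = (a t) ^ 2 := by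
            linear_combination hv2
          have h4 : f (t + 1) + f t ≤ 2 * s3 * f t := by
            nlinarith [mul_nonneg (by linarith : (0:ℝ) ≤ s3 - 1) hu.le]
          calc (a t) ^ 2 = (f (t + 1) - f t) * (f (t + 1) + f t) := h3.symm
            _ ≤ (f (t + 1) - f t) * (2 * s3 * f t) :=
                mul_le_mul_of_nonneg_left h4 hDnn
            _ = 2 * s3 * (f (t + 1) - f t) * f t := by ring
        calc min ((a t) ^ 2 / f t) (C * a t) ≤ (a t) ^ 2 / f t := min_le_left _ _
          _ ≤ 2 * s3 * (f (t + 1) - f t) := hgoal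
          _ ≤ 2 * s3 * (f (t + 1) - f t) + 0 := by linarith
  -- sum the per-term bounds
  have hsum : ∑ t ∈ Finset.range T,
      (if S t = 0 then C * a t else min ((a t) ^ 2 / f t) (C * a t))
      ≤ (∑ t ∈ Finset.range T, 2 * s3 * (f (t + 1) - f t))
        + ∑ t ∈ Finset.range T, (if 2 * S t < (a t) ^ 2 then C * a t else 0) := by
    rw [← Finset.sum_add_distrib]
    exact Finset.sum_le_sum fun t _ => key t
  have htel : (∑ t ∈ Finset.range T, 2 * s3 * (f (t + 1) - f t)) = 2 * s3 * (f T - f 0) := by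
    rw [← Finset.mul_sum, Finset.sum_range_sub]
  have hf0 : f 0 = 0 := by simp [hfdef, hSdef]
  -- the bad set
  set B := (Finset.range T).filter (fun t => 2 * S t < (a t) ^ 2) with hBdef
  have hind : (∑ t ∈ Finset.range T, (if 2 * S t < (a t) ^ 2 then C * a t else 0))
      = ∑ t ∈ B, C * a t := by
    rw [hBdef, Finset.sum_filter]
  -- bound on the bad sum
  have hbadsum : ∑ t ∈ B, C * a t ≤ C * ((3 + s3) / 2 * M) := by
    rcases B.eq_empty_or_nonempty with hB | hB
    · rw [hB]; simp; positivity
    · set m := B.max' hB with hm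
      have hmB : m ∈ B := B.max'_mem hB
      have hmT : m < T := Finset.mem_range.mp (Finset.mem_filter.mp hmB).1
      have hmbad : 2 * S m < (a m) ^ 2 := (Finset.mem_filter.mp hmB).2
      -- each bad term: s2 * a t ≤ (s3+1) * (f (t+1) - f t)
      have hterm : ∀ t ∈ B, s2 * a t ≤ (s3 + 1) * (f (t + 1) - f t) := by
        intro t htB
        have hbad : 2 * S t < (a t) ^ 2 := (Finset.mem_filter.mp htB).2
        have hapos : 0 < a t := by
          rcases lt_or_eq_of_le (ha t) with h | h
          · exact h
          · exfalso; nlinarith [hSnn t]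
        have hv2 : (f (t + 1)) ^ 2 = (f t) ^ 2 + (a t) ^ 2 := by
          rw [hfsq, hfsq, hSsucc]
        have hDnn : 0 ≤ f (t + 1) - f t := sub_nonneg.mpr (hfmono t)
        have hvnn := hfnn (t + 1)
        have hunn := hfnn t
        -- s2 * v ≤ s3 * a t  since  2 S(t+1) ≤ 3 a²
        have h1 : s2 * f (t + 1) ≤ s3 * a t := by
          have h : 2 * S (t + 1) ≤ 3 * (a t) ^ 2 := by rw [hSsucc]; linarith
          have h' := Real.sqrt_le_sqrt h
          rwa [Real.sqrt_mul (by norm_num : (0:ℝ) ≤ 2), Real.sqrt_mul (by norm_num : (0:ℝ) ≤ 3),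
            Real.sqrt_sq (ha t)] at h'
        -- s3 * u ≤ v  since  3 S t ≤ S (t+1)
        have h2 : s3 * f t ≤ f (t + 1) := by
          have h : 3 * S t ≤ S (t + 1) := by rw [hSsucc]; linarith
          have h' := Real.sqrt_le_sqrt h
          rwa [Real.sqrt_mul (by norm_num : (0:ℝ) ≤ 3)] at h'
        have h3 : (f (t + 1) - f t) * (f (t + 1) + f t) = (a t) ^ 2 := by
          linear_combination hv2
        have hs3a : 0 < s3 * a t := mul_pos (by linarith) hapos
        have hx : s3 * (f (t + 1) + f t) ≤ (s3 + 1) * f (t + 1) := by linarith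
        have hchain : s2 * s3 * (a t) ^ 2 ≤ s3 * a t * ((s3 + 1) * (f (t + 1) - f t)) := by
          calc s2 * s3 * (a t) ^ 2
              = (s3 * (f (t + 1) + f t)) * (s2 * (f (t + 1) - f t)) := by rw [← h3]; ring
            _ ≤ ((s3 + 1) * f (t + 1)) * (s2 * (f (t + 1) - f t)) :=
                mul_le_mul_of_nonneg_right hx (by positivity)
            _ = (s2 * f (t + 1)) * ((s3 + 1) * (f (t + 1) - f t)) := by ring
            _ ≤ (s3 * a t) * ((s3 + 1) * (f (t + 1) - f t)) :=
                mul_le_mul_of_nonneg_right h1 (by positivity)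
        refine le_of_mul_le_mul_left ?_ hs3a
        calc s3 * a t * (s2 * a t) = s2 * s3 * (a t) ^ 2 := by ring
          _ ≤ s3 * a t * ((s3 + 1) * (f (t + 1) - f t)) := hchain
      -- sum of bad increments telescopes up to f (m+1)
      have hsub : B ⊆ Finset.range (m + 1) := fun t htB =>
        Finset.mem_range.mpr (Nat.lt_succ_of_le (B.le_max' t htB))
      have hsumB : ∑ t ∈ B, (f (t + 1) - f t) ≤ f (m + 1) := by
        calc ∑ t ∈ B, (f (t + 1) - f t)
            ≤ ∑ t ∈ Finset.range (m + 1), (f (t + 1) - f t) := by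
              apply Finset.sum_le_sum_of_subset_of_nonneg hsub
              intro t _ _; have := hfmono t; linarith
          _ = f (m + 1) - f 0 := Finset.sum_range_sub f (m + 1)
          _ ≤ f (m + 1) := by rw [hf0]; linarith [hfnn (m + 1)]
      -- s2 * f (m+1) ≤ s3 * M
      have hfm : s2 * f (m + 1) ≤ s3 * M := by
        have haM : a m ≤ M := hmax m hmT
        have h : 2 * S (m + 1) ≤ 3 * M ^ 2 := by
          rw [hSsucc]; nlinarith [ha m]
        have h' := Real.sqrt_le_sqrt h
        rwa [Real.sqrt_mul (by norm_num : (0:ℝ) ≤ 2), Real.sqrt_mul (by norm_num : (0:ℝ) ≤ 3),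
          Real.sqrt_sq hM] at h'
      -- combine
      have hba : ∑ t ∈ B, a t ≤ (3 + s3) / 2 * M := by
        have h4 : s2 * ∑ t ∈ B, a t ≤ (s3 + 1) * ∑ t ∈ B, (f (t + 1) - f t) := by
          rw [Finset.mul_sum, Finset.mul_sum]
          exact Finset.sum_le_sum hterm
        have h5 : (s3 + 1) * (∑ t ∈ B, (f (t + 1) - f t)) ≤ (s3 + 1) * f (m + 1) :=
          mul_le_mul_of_nonneg_left hsumB (by linarith)
        have h45 : s2 * ∑ t ∈ B, a t ≤ (s3 + 1) * f (m + 1) := le_trans h4 h5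
        have h6 : s2 * (s2 * ∑ t ∈ B, a t) ≤ s2 * ((s3 + 1) * f (m + 1)) :=
          mul_le_mul_of_nonneg_left h45 hs2nn
        have h7 : s2 * ((s3 + 1) * f (m + 1)) ≤ (s3 + 1) * (s3 * M) := by
          calc s2 * ((s3 + 1) * f (m + 1)) = (s3 + 1) * (s2 * f (m + 1)) := by ring
            _ ≤ (s3 + 1) * (s3 * M) := mul_le_mul_of_nonneg_left hfm (by linarith)
        have e1 : s2 * (s2 * ∑ t ∈ B, a t) = 2 * ∑ t ∈ B, a t := by
          rw [show s2 * (s2 * ∑ t ∈ B, a t) = s2 ^ 2 * ∑ t ∈ B, a t from by ring, hs2]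
        have e2 : (s3 + 1) * (s3 * M) = (3 + s3) * M := by
          rw [show (s3 + 1) * (s3 * M) = s3 ^ 2 * M + s3 * M from by ring, hs3]; ring
        linarith
      calc ∑ t ∈ B, C * a t = C * ∑ t ∈ B, a t := by rw [Finset.mul_sum]
        _ ≤ C * ((3 + s3) / 2 * M) := mul_le_mul_of_nonneg_left hba hC
  -- conclude
  have hfT : 0 ≤ f T := hfnn T
  have hCM : 0 ≤ C * M := mul_nonneg hC hM
  show (∑ t ∈ Finset.range T,
      (if S t = 0 then C * a t else min ((a t) ^ 2 / f t) (C * a t)))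
      ≤ 3.5 * C * M + 3.5 * f T
  have k1 : 2 * s3 * f T ≤ 3.5 * f T := by nlinarith
  have k2 : C * ((3 + s3) / 2 * M) ≤ 3.5 * C * M := by nlinarith
  calc (∑ t ∈ Finset.range T,
      (if S t = 0 then C * a t else min ((a t) ^ 2 / f t) (C * a t)))
      ≤ 2 * s3 * (f T - f 0) + ∑ t ∈ B, C * a t := by
        rw [← htel, ← hind]; exact hsum
    _ ≤ 2 * s3 * f T + C * ((3 + s3) / 2 * M) := by rw [hf0]; linarith
    _ ≤ 3.5 * C * M + 3.5 * f T := by linarith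
end

section
/- For every real z ≥ 0: z·sqrt(3) + min(1, 1/(z·sqrt(3))) ≤ sqrt(3 + 3z²), where for z = 0 the minimum is interpreted as 1. -/
theorem z_sqrt3_min_ineq (z : ℝ) (hz : 0 ≤ z) :
    z * Real.sqrt 3 + (if z = 0 then 1 else min 1 (1 / (z * Real.sqrt 3)))
      ≤ Real.sqrt (3 + 3 * z ^ 2) := by
  have h3 : (0:ℝ) < Real.sqrt 3 := Real.sqrt_pos.2 (by norm_num)
  have hs : Real.sqrt 3 ^ 2 = 3 := Real.sq_sqrt (by norm_num)
  by_cases h0 : z = 0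
  · subst h0
    simp only [if_pos, zero_mul, zero_add, mul_zero]
    norm_num
  · have hzpos : 0 < z := lt_of_le_of_ne hz (Ne.symm h0)
    rw [if_neg h0]
    set t := z * Real.sqrt 3 with ht
    have htpos : 0 < t := mul_pos hzpos h3
    have ht2 : t ^ 2 = 3 * z ^ 2 := by rw [ht, mul_pow, hs]; ring
    rw [show (3:ℝ) + 3 * z ^ 2 = t ^ 2 + 3 by rw [ht2]; ring]
    rcases le_total t 1 with hle | hge
    · have hmin : min 1 (1 / t) = 1 := min_eq_left (by
        rw [le_div_iff₀ htpos]; linarith)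
      rw [hmin]
      rw [show t + 1 = Real.sqrt ((t+1)^2) by
        rw [Real.sqrt_sq (by linarith)]]
      apply Real.sqrt_le_sqrt
      nlinarith
    · have hmin : min 1 (1 / t) = 1 / t := min_eq_right (by
        rw [div_le_one htpos]; linarith)
      rw [hmin]
      rw [show t + 1 / t = Real.sqrt ((t + 1/t)^2) by
        rw [Real.sqrt_sq (by positivity)]]
      apply Real.sqrt_le_sqrt
      have h1t : 1 / t ≤ 1 := by rw [div_le_one htpos]; linarith
      have h1tn : 0 < 1 / t := by positivity
      nlinarith [mul_one_div_cancel (ne_of_gt htpos)]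
end

section
/- Let α > 1 and let a_1, ..., a_T be positive reals. For each t, let M_t = max(a_1, ..., a_t) with M_0 = 0. If a_t² ≤ α²·sum_{s=1}^{t-1} a_s², then min(a_t²/sqrt(sum_{s=1}^{t-1} a_s²), C·a_t) ≤ 2·sqrt(1+α²)·(sqrt(sum_{s=1}^t a_s²) − sqrt(sum_{s=1}^{t-1} a_s²)), for any C ≥ 0. -/
/-- First case in the proof of the useful inequality: if `a t ^ 2 ≤ α² ∑_{s<t} a s²`
(with positive prefix sum), then the min term is bounded by a telescoping difference. -/
theorem useful_case_small (α C : ℝ) (hα : 1 < α) (hC : 0 ≤ C)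
    (a : ℕ → ℝ) (ha : ∀ s, 0 < a s) (t : ℕ)
    (hS : 0 < ∑ s ∈ Finset.range t, (a s) ^ 2)
    (h : (a t) ^ 2 ≤ α ^ 2 * ∑ s ∈ Finset.range t, (a s) ^ 2) :
    min ((a t) ^ 2 / Real.sqrt (∑ s ∈ Finset.range t, (a s) ^ 2)) (C * a t)
      ≤ 2 * Real.sqrt (1 + α ^ 2) *
        (Real.sqrt (∑ s ∈ Finset.range (t + 1), (a s) ^ 2)
          - Real.sqrt (∑ s ∈ Finset.range t, (a s) ^ 2)) := by
  set S := ∑ s ∈ Finset.range t, (a s) ^ 2 with hSdef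
  have hsum : ∑ s ∈ Finset.range (t + 1), (a s) ^ 2 = S + (a t) ^ 2 := by
    rw [Finset.sum_range_succ]
  rw [hsum]
  set u := Real.sqrt S with hu
  set v := Real.sqrt (S + (a t) ^ 2) with hv
  have hat : 0 < a t := ha t
  have hupos : 0 < u := Real.sqrt_pos.mpr hS
  have hvpos : 0 < v := Real.sqrt_pos.mpr (by positivity)
  have hu2 : u ^ 2 = S := Real.sq_sqrt hS.le
  have hv2 : v ^ 2 = S + (a t) ^ 2 := Real.sq_sqrt (by positivity)
  set K := Real.sqrt (1 + α ^ 2) with hK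
  have hKpos : 0 < K := Real.sqrt_pos.mpr (by nlinarith)
  have hK2 : K ^ 2 = 1 + α ^ 2 := Real.sq_sqrt (by nlinarith)
  -- v ≤ K * u
  have hvKu : v ≤ K * u := by
    have : v ^ 2 ≤ (K * u) ^ 2 := by
      rw [hv2, mul_pow, hK2, hu2]; nlinarith
    nlinarith [mul_pos hKpos hupos]
  -- key: a t ^ 2 = (v - u) * (v + u)
  have hkey : (a t) ^ 2 = (v - u) * (v + u) := by nlinarith
  have hmain : (a t) ^ 2 / u ≤ 2 * K * (v - u) := by
    rw [div_le_iff₀ hupos]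
    have hvu : 0 ≤ v - u := by
      have : u ^ 2 ≤ v ^ 2 := by nlinarith
      nlinarith
    calc (a t) ^ 2 = (v - u) * (v + u) := hkey
      _ ≤ (v - u) * (2 * K * u) := by
          apply mul_le_mul_of_nonneg_left _ hvu
          nlinarith [Real.one_le_sqrt.mpr (by nlinarith : (1:ℝ) ≤ 1 + α ^ 2)]
      _ = 2 * K * (v - u) * u := by ring
  exact le_trans (min_le_left _ _) hmain
end

section
/- Let K be a non-empty closed convex subset of a finite-dimensional real normed vector space with diameter D = sup_{u,v∈K} ‖u−v‖ < ∞. Let f : K → ℝ be λ-strongly convex (λ > 0) and lower semi-continuous, and let f*(ℓ) = sup_{w∈K}(⟨ℓ,w⟩ − f(w)) be its Fenchel conjugate. Then for any x, y in the dual space, the Bregman divergence satisfies B_{f*}(x, y) ≤ D·‖x − y‖_*. -/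
/-- Property 6 of Proposition 2: for a `λ`-strongly convex lower semi-continuous
function on a non-empty closed convex bounded set `K` with diameter `D`, the Bregman
divergence of the Fenchel conjugate satisfies `B_{f*}(x,y) ≤ D ‖x-y‖_*`.
Here `g ℓ` denotes `∇f*(ℓ) = argmin_{w ∈ K} (f w - ℓ w)`. -/
theorem bregman_conjugate_le_diam_mul {E : Type*} [NormedAddCommGroup E]
    [NormedSpace ℝ E] [FiniteDimensional ℝ E]
    (K : Set E) (hK : K.Nonempty) (hKc : IsClosed K) (hKconv : Convex ℝ K)
    (hKb : Bornology.IsBounded K)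
    (lam : ℝ) (hlam : 0 < lam) (f : E → ℝ)
    (hsc : StrongConvexOn K lam f) (hlsc : LowerSemicontinuousOn f K)
    (g : (E →L[ℝ] ℝ) → E)
    (hg : ∀ ℓ : E →L[ℝ] ℝ, g ℓ ∈ K ∧ IsMinOn (fun w => f w - ℓ w) K (g ℓ))
    (x y : E →L[ℝ] ℝ) :
    sSup ((fun w => x w - f w) '' K) - sSup ((fun w => y w - f w) '' K)
        - (x - y) (g y)
      ≤ Metric.diam K * ‖x - y‖ := by
  obtain ⟨hgyK, hgymin⟩ := hg y
  set b : ℝ := y (g y) - f (g y) with hb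
  have hbound : ∀ w ∈ K, y w - f w ≤ b := by
    intro w hw
    have := hgymin hw
    simp only [Set.mem_setOf_eq] at this
    linarith [this]
  have hbdd : BddAbove ((fun w => y w - f w) '' K) := by
    refine ⟨b, ?_⟩
    rintro z ⟨w, hw, rfl⟩
    exact hbound w hw
  have hle : b ≤ sSup ((fun w => y w - f w) '' K) :=
    le_csSup hbdd ⟨g y, hgyK, rfl⟩
  have hsup : sSup ((fun w => x w - f w) '' K)
      ≤ b + (x - y) (g y) + Metric.diam K * ‖x - y‖ := by
    apply csSup_le (hK.image _)
    rintro z ⟨w, hw, rfl⟩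
    dsimp only
    have h1 : y w - f w ≤ b := hbound w hw
    have h2 : (x - y) (w - g y) ≤ ‖x - y‖ * ‖w - g y‖ :=
      le_trans (le_abs_self _) ((x - y).le_opNorm _)
    have h3 : ‖w - g y‖ ≤ Metric.diam K := by
      rw [← dist_eq_norm]
      exact Metric.dist_le_diam_of_mem hKb hw hgyK
    have h4 : ‖x - y‖ * ‖w - g y‖ ≤ Metric.diam K * ‖x - y‖ := by
      rw [mul_comm]
      exact mul_le_mul_of_nonneg_right h3 (norm_nonneg _)
    have h5 : (x - y) (w - g y) = x w - y w - ((x - y) (g y)) := by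
      simp only [ContinuousLinearMap.sub_apply, map_sub]
    linarith [h1, h2, h4, h5]
  linarith
end

section
/- Let f : K → ℝ be λ-strongly convex and lower semi-continuous on a non-empty closed convex subset K of a finite-dimensional normed space. Then for all x, y in the dual space, ‖∇f*(x) − ∇f*(y)‖ ≤ (1/λ)·‖x − y‖_*, i.e., the gradient of the Fenchel conjugate is (1/λ)-Lipschitz from the dual norm to the primal norm. -/
/-- Strong optimality: if `u` minimizes `f - ℓ` on `K` and `f` is `lam`-strongly convex,
then `f u - ℓ u + lam/2 * ‖u - v‖^2 ≤ f v - ℓ v` for all `v ∈ K`. -/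
lemma strong_min_ineq {E : Type*} [NormedAddCommGroup E] [NormedSpace ℝ E]
    {K : Set E} {lam : ℝ} (hlam : 0 < lam) {f : E → ℝ}
    (hsc : StrongConvexOn K lam f) (ℓ : E →L[ℝ] ℝ) {u : E} (hu : u ∈ K)
    (hmin : IsMinOn (fun w => f w - ℓ w) K u) {v : E} (hv : v ∈ K) :
    (f u - ℓ u) + lam / 2 * ‖u - v‖ ^ 2 ≤ f v - ℓ v := by
  set c : ℝ := lam / 2 * ‖u - v‖ ^ 2 with hc
  have hc0 : 0 ≤ c := by positivity
  -- for every b ∈ (0,1], (f u - ℓ u) + (1-b)*c ≤ f v - ℓ v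
  have key : ∀ b : ℝ, 0 < b → b ≤ 1 → (f u - ℓ u) + (1 - b) * c ≤ f v - ℓ v := by
    intro b hb hb1
    have ha : (0:ℝ) ≤ 1 - b := by linarith
    have hab : (1 - b) + b = 1 := by ring
    have hmem : (1 - b) • u + b • v ∈ K := hsc.1 hu hv ha hb.le hab
    have h1 : f ((1 - b) • u + b • v) ≤ (1 - b) * f u + b * f v - (1 - b) * b * c := by
      simpa [smul_eq_mul, hc] using hsc.2 hu hv ha hb.le hab
    have h2 : f u - ℓ u ≤ f ((1 - b) • u + b • v) - ℓ ((1 - b) • u + b • v) :=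
      hmin hmem
    have hℓ : ℓ ((1 - b) • u + b • v) = (1 - b) * ℓ u + b * ℓ v := by
      simp [map_add, map_smul, smul_eq_mul]
    have h3 : f u - ℓ u ≤ (1 - b) * (f u - ℓ u) + b * (f v - ℓ v) - (1 - b) * b * c := by
      rw [hℓ] at h2; nlinarith [h1, h2]
    have h4 : b * ((f u - ℓ u) + (1 - b) * c) ≤ b * (f v - ℓ v) := by nlinarith
    exact le_of_mul_le_mul_left h4 hb
  -- take the limit b → 0⁺
  have hlim : Filter.Tendsto (fun b : ℝ => (f u - ℓ u) + (1 - b) * c)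
      (nhdsWithin 0 (Set.Ioi 0)) (nhds ((f u - ℓ u) + (1 - 0) * c)) := by
    apply Filter.Tendsto.mono_left _ nhdsWithin_le_nhds
    exact Filter.Tendsto.const_add _ (((tendsto_const_nhds.sub Filter.tendsto_id).mul tendsto_const_nhds))
  have : (f u - ℓ u) + (1 - 0) * c ≤ f v - ℓ v := by
    refine le_of_tendsto hlim ?_
    filter_upwards [Ioo_mem_nhdsGT_of_mem (Set.left_mem_Ico.mpr one_pos)] with b hb
    exact key b hb.1 hb.2.le
  linarith

/-- Property 5 of Proposition 2: the gradient of the Fenchel conjugate of a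
`λ`-strongly convex lower semi-continuous function is `(1/λ)`-Lipschitz from the
dual norm to the primal norm. Here `g ℓ = ∇f*(ℓ) = argmin_{w ∈ K} (f w - ℓ w)`. -/
theorem grad_conjugate_lipschitz {E : Type*} [NormedAddCommGroup E]
    [NormedSpace ℝ E] [FiniteDimensional ℝ E]
    (K : Set E) (hK : K.Nonempty) (hKc : IsClosed K) (hKconv : Convex ℝ K)
    (lam : ℝ) (hlam : 0 < lam) (f : E → ℝ)
    (hsc : StrongConvexOn K lam f) (hlsc : LowerSemicontinuousOn f K)
    (g : (E →L[ℝ] ℝ) → E)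
    (hg : ∀ ℓ : E →L[ℝ] ℝ, g ℓ ∈ K ∧ IsMinOn (fun w => f w - ℓ w) K (g ℓ))
    (x y : E →L[ℝ] ℝ) :
    ‖g x - g y‖ ≤ (1 / lam) * ‖x - y‖ := by
  obtain ⟨hgx, hmx⟩ := hg x
  obtain ⟨hgy, hmy⟩ := hg y
  set u := g x
  set v := g y
  have h1 := strong_min_ineq hlam hsc x hgx hmx hgy
  have h2 := strong_min_ineq hlam hsc y hgy hmy hgx
  have hnorm : ‖v - u‖ = ‖u - v‖ := norm_sub_rev _ _
  have hsum : lam * ‖u - v‖ ^ 2 ≤ (x - y) (u - v) := by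
    have := h2
    rw [hnorm] at this
    have hx : (x - y) (u - v) = (x u - x v) + (y v - y u) := by
      simp [map_sub]; ring
    nlinarith [h1, this]
  have hbound : (x - y) (u - v) ≤ ‖x - y‖ * ‖u - v‖ :=
    (le_abs_self _).trans (by simpa [Real.norm_eq_abs] using (x - y).le_opNorm (u - v))
  rcases eq_or_lt_of_le (norm_nonneg (u - v)) with h0 | h0
  · rw [← h0]; positivity
  · have : lam * ‖u - v‖ ≤ ‖x - y‖ := by
      have := hsum.trans hbound
      nlinarith
    rw [div_mul_eq_mul_div, le_div_iff₀ hlam, mul_comm]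
    linarith
end

section
/- Let f : K → ℝ be λ-strongly convex lower semi-continuous on a non-empty closed convex set K. Then its Fenchel conjugate f* is (1/λ)-strongly smooth: for any x, y in the dual space, B_{f*}(x, y) ≤ (1/(2λ))·‖x − y‖_*². -/
/-- Property 4 of Proposition 2: the Fenchel conjugate of a `λ`-strongly convex
lower semi-continuous function is `(1/λ)`-strongly smooth:
`B_{f*}(x,y) ≤ (1/(2λ)) ‖x - y‖_*²`. Here `g ℓ = ∇f*(ℓ) = argmin_{w ∈ K} (f w - ℓ w)`. -/
theorem conjugate_strongly_smooth {E : Type*} [NormedAddCommGroup E]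
    [NormedSpace ℝ E] [FiniteDimensional ℝ E]
    (K : Set E) (hK : K.Nonempty) (hKc : IsClosed K) (hKconv : Convex ℝ K)
    (lam : ℝ) (hlam : 0 < lam) (f : E → ℝ)
    (hsc : StrongConvexOn K lam f) (hlsc : LowerSemicontinuousOn f K)
    (g : (E →L[ℝ] ℝ) → E)
    (hg : ∀ ℓ : E →L[ℝ] ℝ, g ℓ ∈ K ∧ IsMinOn (fun w => f w - ℓ w) K (g ℓ))
    (x y : E →L[ℝ] ℝ) :
    sSup ((fun w => x w - f w) '' K) - sSup ((fun w => y w - f w) '' K)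
        - (x - y) (g y)
      ≤ (1 / (2 * lam)) * ‖x - y‖ ^ 2 := by
  obtain ⟨hgyK, hgymin⟩ := hg y
  -- quadratic growth: for all w ∈ K,
  -- f (g y) - y (g y) + (lam/2) ‖w - g y‖² ≤ f w - y w
  have growth : ∀ w ∈ K,
      f (g y) - y (g y) + lam / 2 * ‖w - g y‖ ^ 2 ≤ f w - y w := by
    intro w hw
    have key : ∀ t : ℝ, t ∈ Set.Ioo (0:ℝ) 1 →
        f (g y) - y (g y) + (1 - t) * (lam / 2 * ‖w - g y‖ ^ 2) ≤ f w - y w := by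
      intro t ht
      obtain ⟨ht0, ht1⟩ := ht
      have hconv := hsc.2 hw hgyK (le_of_lt ht0) (by linarith : (0:ℝ) ≤ 1 - t)
        (by ring : t + (1 - t) = 1)
      set z := t • w + (1 - t) • g y with hz
      have hzK : z ∈ K := hKconv hw hgyK (le_of_lt ht0) (by linarith) (by ring)
      have hmin := hgymin hzK
      simp only [Set.mem_setOf_eq] at hmin
      have hyz : y z = t * y w + (1 - t) * y (g y) := by
        simp [hz, map_add, map_smul, smul_eq_mul]
      have h1 : f (g y) - y (g y) ≤ f z - y z := hmin
      rw [hyz] at h1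
      simp only [smul_eq_mul] at hconv
      nlinarith [hconv, h1]
    -- take t → 0
    have hc : 0 ≤ lam / 2 * ‖w - g y‖ ^ 2 := by positivity
    have : ∀ ε > (0:ℝ), f (g y) - y (g y) + lam / 2 * ‖w - g y‖ ^ 2
        ≤ (f w - y w) + ε := by
      intro ε hε
      set c := lam / 2 * ‖w - g y‖ ^ 2
      set t := min (1/2 : ℝ) (ε / (c + 1)) with htdef
      have ht0 : 0 < t := lt_min (by norm_num) (by positivity)
      have ht1 : t < 1 := lt_of_le_of_lt (min_le_left _ _) (by norm_num)
      have h := key t ⟨ht0, ht1⟩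
      have htc : t * c ≤ ε := by
        have h1 : t ≤ ε / (c + 1) := min_le_right _ _
        have h2 : t * c ≤ (ε / (c + 1)) * (c + 1) := by
          have : t * c ≤ t * (c + 1) := by nlinarith
          calc t * c ≤ t * (c + 1) := this
            _ ≤ (ε / (c + 1)) * (c + 1) := by
                apply mul_le_mul_of_nonneg_right h1; linarith
        rwa [div_mul_cancel₀ ε (by positivity : c + 1 ≠ 0)] at h2
      nlinarith [h]
    linarith [le_of_forall_pos_le_add this]
  -- sSup for y is attained at g y
  have hsupy : sSup ((fun w => y w - f w) '' K) = y (g y) - f (g y) := by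
    apply IsGreatest.csSup_eq
    constructor
    · exact ⟨g y, hgyK, rfl⟩
    · rintro v ⟨w, hw, rfl⟩
      have := hgymin hw
      simp only [Set.mem_setOf_eq] at this
      dsimp only
      linarith
  rw [hsupy]
  have hbound : sSup ((fun w => x w - f w) '' K)
      ≤ (y (g y) - f (g y)) + (x - y) (g y) + (1 / (2 * lam)) * ‖x - y‖ ^ 2 := by
    apply csSup_le (hK.image _)
    rintro v ⟨w, hw, rfl⟩
    have hgro := growth w hw
    have hpair : (x - y) (w - g y) ≤ ‖x - y‖ * ‖w - g y‖ :=
      le_trans (le_abs_self _) ((x - y).le_opNorm (w - g y))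
    have hamgm : ‖x - y‖ * ‖w - g y‖ - lam / 2 * ‖w - g y‖ ^ 2
        ≤ (1 / (2 * lam)) * ‖x - y‖ ^ 2 := by
      have h2 : (0:ℝ) < 2 * lam := by positivity
      have : ‖x - y‖ * ‖w - g y‖ - lam / 2 * ‖w - g y‖ ^ 2 ≤ ‖x - y‖ ^ 2 / (2 * lam) := by
        rw [le_div_iff₀ h2]
        nlinarith [sq_nonneg (‖x - y‖ - lam * ‖w - g y‖)]
      calc _ ≤ ‖x - y‖ ^ 2 / (2 * lam) := this
        _ = (1 / (2 * lam)) * ‖x - y‖ ^ 2 := by ring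
    have hxw : (x - y) (w - g y) = x w - y w - (x - y) (g y) := by
      simp only [map_sub, ContinuousLinearMap.sub_apply]; try ring
    simp only [ContinuousLinearMap.sub_apply] at hxw hpair ⊢
    linarith [hpair, hgro, hamgm, hxw.le, hxw.ge]
  simp only [ContinuousLinearMap.sub_apply] at hbound ⊢
  linarith
end

section
/- Suppose a sequence (Δ_t)_{t≥0} of non-negative reals satisfies Δ_0 = 0 and Δ_t ≤ Δ_{t-1} + min(D·a_t, a_t²/(2λ·Δ_{t-1})) for all t ≥ 1 (where the second term is +∞ when Δ_{t-1} = 0), with a_t ≥ 0, D > 0, λ > 0. Then for all T ≥ 0: Δ_T ≤ sqrt(3)·max(D, 1/sqrt(2λ))·sqrt(sum_{t=1}^T a_t²). -/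
/-- Solution of the AdaFTRL recurrence. -/
theorem adaftrl_recurrence_solution (D lam : ℝ) (hD : 0 < D) (hlam : 0 < lam)
    (a : ℕ → ℝ) (ha : ∀ t, 0 ≤ a t)
    (Δ : ℕ → ℝ) (hΔ : ∀ t, 0 ≤ Δ t) (h0 : Δ 0 = 0)
    (hrec : ∀ t, Δ (t + 1) ≤ Δ t +
      (if Δ t = 0 then D * a t
       else min (D * a t) ((a t) ^ 2 / (2 * lam * Δ t)))) :
    ∀ T, Δ T ≤ Real.sqrt 3 * max D (1 / Real.sqrt (2 * lam)) *
      Real.sqrt (∑ t ∈ Finset.range T, (a t) ^ 2) := by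
  set C := max D (1 / Real.sqrt (2 * lam)) with hC
  have hCpos : 0 < C := lt_of_lt_of_le hD (le_max_left _ _)
  have h2lam : (0:ℝ) < 2 * lam := by linarith
  have hCD : D ≤ C := le_max_left _ _
  have hC2 : 1 / (2 * lam) ≤ C ^ 2 := by
    have h1 : 1 / Real.sqrt (2 * lam) ≤ C := le_max_right _ _
    have h2 := pow_le_pow_left₀ (by positivity) h1 2
    calc 1 / (2*lam) = (1 / Real.sqrt (2*lam))^2 := by
          rw [div_pow, one_pow, Real.sq_sqrt h2lam.le]
      _ ≤ C^2 := h2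
  have key : ∀ T, Δ T ^ 2 ≤ 3 * C^2 * ∑ t ∈ Finset.range T, (a t)^2 := by
    intro T
    induction T with
    | zero => simp [h0]
    | succ T ih =>
      rw [Finset.sum_range_succ]
      have haT := ha T
      by_cases hz : Δ T = 0
      · have h := hrec T
        rw [hz, if_pos rfl] at h
        simp only [zero_add] at h
        have h2 : Δ (T+1)^2 ≤ (D * a T)^2 := pow_le_pow_left₀ (hΔ _) h 2
        have hsum : 0 ≤ ∑ t ∈ Finset.range T, (a t)^2 := by positivity
        have hDa : (D * a T)^2 ≤ C^2 * (a T)^2 := by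
          have h4 : D * a T ≤ C * a T := mul_le_mul_of_nonneg_right hCD haT
          calc (D * a T)^2 ≤ (C * a T)^2 := pow_le_pow_left₀ (by positivity) h4 2
            _ = C^2 * (a T)^2 := by ring
        nlinarith [sq_nonneg C]
      · have hpos : 0 < Δ T := lt_of_le_of_ne (hΔ T) (Ne.symm hz)
        have h := hrec T
        rw [if_neg hz] at h
        have hmin1 : min (D * a T) ((a T)^2 / (2 * lam * Δ T)) ≤ D * a T := min_le_left _ _
        have hmin2 : min (D * a T) ((a T)^2 / (2 * lam * Δ T)) ≤ (a T)^2 / (2*lam*Δ T) := min_le_right _ _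
        have hminnn : 0 ≤ min (D * a T) ((a T)^2 / (2 * lam * Δ T)) := le_min (by positivity) (by positivity)
        have hsq : Δ (T+1)^2 ≤ (Δ T + min (D * a T) ((a T)^2 / (2 * lam * Δ T)))^2 :=
          pow_le_pow_left₀ (hΔ _) h 2
        have hcross : Δ T * min (D * a T) ((a T)^2 / (2 * lam * Δ T)) ≤ (a T)^2 / (2 * lam) := by
          calc Δ T * min (D * a T) ((a T)^2 / (2 * lam * Δ T))
              ≤ Δ T * ((a T)^2 / (2*lam*Δ T)) := mul_le_mul_of_nonneg_left hmin2 hpos.le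
            _ = (a T)^2 / (2*lam) := by field_simp
        have hminsq : (min (D * a T) ((a T)^2 / (2 * lam * Δ T)))^2 ≤ (D * a T)^2 :=
          pow_le_pow_left₀ hminnn hmin1 2
        have hdiv : (a T)^2 / (2*lam) ≤ C^2 * (a T)^2 := by
          have h3 := mul_le_mul_of_nonneg_right hC2 (sq_nonneg (a T))
          calc (a T)^2 / (2*lam) = 1/(2*lam) * (a T)^2 := by ring
            _ ≤ C^2 * (a T)^2 := h3
        have hDa : (D * a T)^2 ≤ C^2 * (a T)^2 := by
          have h4 : D * a T ≤ C * a T := mul_le_mul_of_nonneg_right hCD haT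
          calc (D * a T)^2 ≤ (C * a T)^2 := pow_le_pow_left₀ (by positivity) h4 2
            _ = C^2 * (a T)^2 := by ring
        nlinarith [ih]
  intro T
  have hs : 0 ≤ ∑ t ∈ Finset.range T, (a t)^2 := by positivity
  have hkey := key T
  have h1 : Δ T ≤ Real.sqrt (3 * C^2 * ∑ t ∈ Finset.range T, (a t)^2) := by
    rw [← Real.sqrt_sq (hΔ T)]
    exact Real.sqrt_le_sqrt hkey
  calc Δ T ≤ _ := h1
    _ = Real.sqrt 3 * C * Real.sqrt (∑ t ∈ Finset.range T, (a t)^2) := by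
      rw [Real.sqrt_mul (by positivity), Real.sqrt_mul (by norm_num : (0:ℝ) ≤ 3),
        Real.sqrt_sq hCpos.le]
end

section
/- Let w_1, ..., w_T be any (possibly random) elements of a compact convex set K in a normed space with diameter D, chosen so that w_t may depend only on ℓ_1, ..., ℓ_{t−1}. Fix a dual vector ℓ with ‖ℓ‖_* = 1 and x, y ∈ K with ⟨ℓ, x − y⟩ = D. If ℓ_t = Z_t·a_t·ℓ for i.i.d. Rademacher Z_t and non-negative reals a_t, then E[sup_{u∈K} (sum_{t=1}^T ⟨ℓ_t, w_t⟩ − sum_{t=1}^T ⟨ℓ_t, u⟩)] ≥ (D/sqrt(8))·sqrt(sum_{t=1}^T a_t²). -/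
/-!
Write `S = ∑ₜ Zₜ aₜ` and `C = ∑ₜ Zₜ aₜ ℓ(wₜ)`, so that the regret against `u` is `C - S ℓ(u)`.
Comparing only with `x` and `y`, the regret is at least
`max (C - S ℓ(x)) (C - S ℓ(y)) = C - S (ℓ(x) + ℓ(y)) / 2 + |S| |D| / 2`.
As `wₜ` depends on `Z₀, …, Zₜ₋₁` only, `Zₜ` is independent of `aₜ ℓ(wₜ)`, hence `E C = 0 = E S`
and the expected regret is at least `|D| / 2 ⬝ E |S|`. Szarek's sharp Khinchin inequality
`E S² ≤ 2 (E |S|)²` concludes.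

Khinchin's inequality is proved on the Boolean cube, after Latała and Oleszkiewicz: `f = |S|` is
even, so its Walsh coefficients of degree one vanish, and flipping one sign at a time gives
`∑ᵢ f(flipᵢ η) ≥ (n - 2) f(η)`; in the Walsh basis this says that the weight of the degrees `≥ 2`
is at most that of degree `0`.
-/

open MeasureTheory ProbabilityTheory Finset

namespace BooleanCube

variable {ι : Type*}

def boolSign (b : Bool) : ℝ := if b then 1 else -1

@[simp] lemma boolSign_true : boolSign true = 1 := rfl

@[simp] lemma boolSign_false : boolSign false = -1 := rfl

lemma boolSign_not (b : Bool) : boolSign (!b) = -boolSign b := by cases b <;> simp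

lemma boolSign_mul_self (b : Bool) : boolSign b * boolSign b = 1 := by cases b <;> simp

def walsh (A : Finset ι) (η : ι → Bool) : ℝ := ∏ i ∈ A, boolSign (η i)

lemma sum_walsh_mul_walsh [Fintype ι] (η η' : ι → Bool) :
    ∑ A : Finset ι, walsh A η * walsh A η' = if η = η' then 2 ^ Fintype.card ι else 0 := by
  have hfactor : ∀ i, boolSign (η i) * boolSign (η' i) + 1 = if η i = η' i then 2 else 0 := by
    intro i; cases η i <;> cases η' i <;> norm_num
  calc ∑ A : Finset ι, walsh A η * walsh A η'
      = ∏ i, (boolSign (η i) * boolSign (η' i) + 1) := by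
        simp only [walsh, ← prod_mul_distrib, prod_add_one, powerset_univ]
    _ = if η = η' then 2 ^ Fintype.card ι else 0 := by
        simp only [hfactor, prod_ite_zero, prod_const, card_univ, funext_iff, mem_univ,
          true_imp_iff]

section Flips

variable [DecidableEq ι]

def flipAt (i : ι) (η : ι → Bool) : ι → Bool := Function.update η i (!η i)

lemma flipAt_involutive (i : ι) : Function.Involutive (flipAt i) := by
  intro η
  simp [flipAt, Function.update_idem]

lemma walsh_flipAt (A : Finset ι) (i : ι) (η : ι → Bool) :
    walsh A (flipAt i η) = (if i ∈ A then -1 else 1) * walsh A η := by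
  by_cases hi : i ∈ A
  · rw [walsh, walsh, ← mul_prod_erase A _ hi, ← mul_prod_erase A _ hi, if_pos hi, flipAt,
      Function.update_self, boolSign_not,
      prod_congr rfl fun j hj => by rw [Function.update_of_ne (ne_of_mem_erase hj)]]
    ring
  · rw [if_neg hi, one_mul]
    exact prod_congr rfl fun j hj => by
      rw [flipAt, Function.update_of_ne (by rintro rfl; exact hi hj)]

variable [Fintype ι]

lemma sum_comp_flipAt (i : ι) (g : (ι → Bool) → ℝ) : ∑ η, g (flipAt i η) = ∑ η, g η :=
  Fintype.sum_bijective _ (flipAt_involutive i).bijective _ _ fun _ => rfl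

lemma sum_comp_not (g : (ι → Bool) → ℝ) : ∑ η : ι → Bool, g (fun i => !η i) = ∑ η, g η :=
  Fintype.sum_bijective _ (Function.Involutive.bijective fun η : ι → Bool => by simp) _ _
    fun _ => rfl

def walshCoeff (f : (ι → Bool) → ℝ) (A : Finset ι) : ℝ := ∑ η, f η * walsh A η

lemma sum_walshCoeff_mul_walshCoeff (f g : (ι → Bool) → ℝ) :
    ∑ A, walshCoeff f A * walshCoeff g A = 2 ^ Fintype.card ι * ∑ η, f η * g η := by
  calc ∑ A, walshCoeff f A * walshCoeff g A
      = ∑ η', ∑ η, f η * g η' * ∑ A : Finset ι, walsh A η * walsh A η' := by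
        simp only [walshCoeff, sum_mul, mul_sum]
        rw [sum_comm]
        refine sum_congr rfl fun η' _ => ?_
        rw [sum_comm]
        exact sum_congr rfl fun η _ => sum_congr rfl fun A _ => by ring
    _ = 2 ^ Fintype.card ι * ∑ η, f η * g η := by
        simp [sum_walsh_mul_walsh, mul_sum, mul_comm]

lemma walshCoeff_comp_flipAt (f : (ι → Bool) → ℝ) (i : ι) (A : Finset ι) :
    walshCoeff (fun η => f (flipAt i η)) A = (if i ∈ A then -1 else 1) * walshCoeff f A := by
  rw [walshCoeff, walshCoeff, mul_sum, ← sum_comp_flipAt i]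
  refine sum_congr rfl fun η _ => ?_
  rw [flipAt_involutive i η, walsh_flipAt]
  ring

lemma walshCoeff_singleton_eq_zero (f : (ι → Bool) → ℝ) (heven : ∀ η, f (fun i => !η i) = f η)
    (i : ι) : walshCoeff f {i} = 0 := by
  have hodd : walshCoeff f {i} = -walshCoeff f {i} := by
    conv_lhs => rw [walshCoeff, ← sum_comp_not]
    rw [walshCoeff, ← sum_neg_distrib]
    refine sum_congr rfl fun η _ => ?_
    simp [walsh, heven, boolSign_not]
  linarith

lemma sum_ite_mem_neg_one_one (A : Finset ι) :
    ∑ i, (if i ∈ A then (-1 : ℝ) else 1) = Fintype.card ι - 2 * #A := by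
  simp only [sum_ite, sum_const, nsmul_eq_mul, mul_one, mul_neg, filter_mem_eq_inter,
    univ_inter, filter_not, ← compl_eq_univ_sdiff]
  rw [← card_add_card_compl A]
  push_cast
  ring

lemma sum_card_sub_two_mul_card_mul_walshCoeff_sq (f : (ι → Bool) → ℝ) :
    ∑ A, ((Fintype.card ι : ℝ) - 2 * #A) * walshCoeff f A ^ 2
      = 2 ^ Fintype.card ι * ∑ η, f η * ∑ i, f (flipAt i η) := by
  calc ∑ A, ((Fintype.card ι : ℝ) - 2 * #A) * walshCoeff f A ^ 2
      = ∑ i, ∑ A, walshCoeff (fun η => f (flipAt i η)) A * walshCoeff f A := by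
        simp only [walshCoeff_comp_flipAt, ← sum_ite_mem_neg_one_one, sum_mul]
        rw [sum_comm]
        exact sum_congr rfl fun A _ => sum_congr rfl fun i _ => by ring
    _ = 2 ^ Fintype.card ι * ∑ η, f η * ∑ i, f (flipAt i η) := by
        simp only [sum_walshCoeff_mul_walshCoeff, ← mul_sum]
        rw [sum_comm]
        simp only [mul_sum, mul_comm]

lemma sq_walshCoeff_le (f : (ι → Bool) → ℝ) (heven : ∀ η, f (fun i => !η i) = f η)
    (A : Finset ι) :
    walshCoeff f A ^ 2 ≤ (if A = ∅ then 2 * walshCoeff f ∅ ^ 2 else 0)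
      + ((#A : ℝ) - 1) * walshCoeff f A ^ 2 := by
  obtain hA | hA | hA : #A = 0 ∨ #A = 1 ∨ 2 ≤ #A := by omega
  · obtain rfl := card_eq_zero.mp hA
    simp [two_mul]
  · obtain ⟨i, rfl⟩ := card_eq_one.mp hA
    simp [walshCoeff_singleton_eq_zero f heven]
  · have hne : A ≠ ∅ := by rintro rfl; simp at hA
    have hcard : (2 : ℝ) ≤ #A := by exact_mod_cast hA
    rw [if_neg hne, zero_add]
    nlinarith [sq_nonneg (walshCoeff f A)]

theorem two_pow_card_mul_sum_sq_le (f : (ι → Bool) → ℝ) (hf : ∀ η, 0 ≤ f η)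
    (heven : ∀ η, f (fun i => !η i) = f η)
    (hsuper : ∀ η, ((Fintype.card ι : ℝ) - 2) * f η ≤ ∑ i, f (flipAt i η)) :
    2 ^ Fintype.card ι * ∑ η, f η ^ 2 ≤ 2 * (∑ η, f η) ^ 2 := by
  set c := walshCoeff f
  have hparseval : ∑ A, c A ^ 2 = 2 ^ Fintype.card ι * ∑ η, f η ^ 2 := by
    simpa only [sq] using sum_walshCoeff_mul_walshCoeff f f
  have hempty : c ∅ = ∑ η, f η := by simp [c, walshCoeff, walsh]
  have hspectral : ((Fintype.card ι : ℝ) - 2) * ∑ A, c A ^ 2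
      ≤ ∑ A, ((Fintype.card ι : ℝ) - 2 * #A) * c A ^ 2 := by
    rw [sum_card_sub_two_mul_card_mul_walshCoeff_sq, hparseval, mul_left_comm, mul_sum]
    refine mul_le_mul_of_nonneg_left (sum_le_sum fun η _ => ?_) (by positivity)
    calc ((Fintype.card ι : ℝ) - 2) * f η ^ 2 = f η * (((Fintype.card ι : ℝ) - 2) * f η) := by
          ring
      _ ≤ f η * ∑ i, f (flipAt i η) := mul_le_mul_of_nonneg_left (hsuper η) (hf η)
  have hhigh : ∑ A, ((#A : ℝ) - 1) * c A ^ 2 ≤ 0 := by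
    have h : ∑ A, ((Fintype.card ι : ℝ) - 2 * #A) * c A ^ 2
        = ((Fintype.card ι : ℝ) - 2) * ∑ A, c A ^ 2 - 2 * ∑ A, ((#A : ℝ) - 1) * c A ^ 2 := by
      rw [mul_sum, mul_sum, ← sum_sub_distrib]
      exact sum_congr rfl fun A _ => by ring
    linarith
  calc 2 ^ Fintype.card ι * ∑ η, f η ^ 2 = ∑ A, c A ^ 2 := hparseval.symm
    _ ≤ ∑ A, ((if A = ∅ then 2 * c ∅ ^ 2 else 0) + ((#A : ℝ) - 1) * c A ^ 2) :=
        sum_le_sum fun A _ => sq_walshCoeff_le f heven A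
    _ = 2 * c ∅ ^ 2 + ∑ A, ((#A : ℝ) - 1) * c A ^ 2 := by
        rw [sum_add_distrib, sum_ite_eq' univ ∅, if_pos (mem_univ ∅)]
    _ ≤ 2 * (∑ η, f η) ^ 2 := by rw [← hempty]; linarith

end Flips

variable [Fintype ι]

def signedSum (a : ι → ℝ) (η : ι → Bool) : ℝ := ∑ i, boolSign (η i) * a i

lemma signedSum_not (a : ι → ℝ) (η : ι → Bool) :
    signedSum a (fun i => !η i) = -signedSum a η := by
  simp [signedSum, boolSign_not, ← sum_neg_distrib]

variable [DecidableEq ι]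

lemma signedSum_flipAt (a : ι → ℝ) (i : ι) (η : ι → Bool) :
    signedSum a (flipAt i η) = signedSum a η - 2 * (boolSign (η i) * a i) := by
  rw [signedSum, signedSum, ← add_sum_erase _ _ (mem_univ i), ← add_sum_erase _ _ (mem_univ i),
    flipAt, Function.update_self, boolSign_not,
    sum_congr rfl fun j hj => by rw [Function.update_of_ne (ne_of_mem_erase hj)]]
  ring

lemma sum_signedSum_flipAt (a : ι → ℝ) (η : ι → Bool) :
    ∑ i, signedSum a (flipAt i η) = ((Fintype.card ι : ℝ) - 2) * signedSum a η := by
  simp only [signedSum_flipAt, sum_sub_distrib, sum_const, card_univ, nsmul_eq_mul, ← mul_sum]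
  rw [← signedSum]
  ring

lemma sum_boolSign_mul_boolSign (i j : ι) :
    ∑ η : ι → Bool, boolSign (η i) * boolSign (η j) = if i = j then 2 ^ Fintype.card ι else 0 := by
  split_ifs with hij
  · simp [hij, boolSign_mul_self]
  · have h := sum_comp_flipAt i fun η => boolSign (η i) * boolSign (η j)
    simp only [flipAt, Function.update_self, Function.update_of_ne (Ne.symm hij), boolSign_not,
      neg_mul, sum_neg_distrib] at h
    linarith

lemma sum_signedSum_sq (a : ι → ℝ) :
    ∑ η, signedSum a η ^ 2 = 2 ^ Fintype.card ι * ∑ i, a i ^ 2 := by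
  calc ∑ η, signedSum a η ^ 2
      = ∑ i, ∑ j, a i * a j * ∑ η : ι → Bool, boolSign (η i) * boolSign (η j) := by
        simp only [signedSum, sq, sum_mul, mul_sum]
        rw [sum_comm]
        refine sum_congr rfl fun i _ => ?_
        rw [sum_comm]
        exact sum_congr rfl fun j _ => sum_congr rfl fun η _ => by ring
    _ = 2 ^ Fintype.card ι * ∑ i, a i ^ 2 := by
        simp [sum_boolSign_mul_boolSign, mul_sum, sq, mul_comm]

theorem khinchin (a : ι → ℝ) :
    (2 ^ Fintype.card ι) ^ 2 * ∑ i, a i ^ 2 ≤ 2 * (∑ η, |signedSum a η|) ^ 2 := by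
  have h := two_pow_card_mul_sum_sq_le (fun η => |signedSum a η|) (fun η => abs_nonneg _)
    (fun η => by rw [signedSum_not, abs_neg]) fun η => by
      calc ((Fintype.card ι : ℝ) - 2) * |signedSum a η|
          ≤ |((Fintype.card ι : ℝ) - 2) * signedSum a η| := by
            rw [abs_mul]; exact mul_le_mul_of_nonneg_right (le_abs_self _) (abs_nonneg _)
        _ ≤ ∑ i, |signedSum a (flipAt i η)| := by
            rw [← sum_signedSum_flipAt]; exact abs_sum_le_sum_abs _ _
  simpa only [sq_abs, sum_signedSum_sq, ← mul_assoc, ← sq] using h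

end BooleanCube

lemma le_sSup_image_sub_mul {I : Set ℝ} (hI : IsCompact I) {p q : ℝ} (hp : p ∈ I) (hq : q ∈ I)
    (c s : ℝ) : c - s * ((p + q) / 2) + |p - q| / 2 * |s| ≤ sSup ((fun v => c - s * v) '' I) := by
  have hbdd : BddAbove ((fun v => c - s * v) '' I) :=
    (hI.image (by fun_prop)).bddAbove
  have hmax : c - s * ((p + q) / 2) + |p - q| / 2 * |s| ≤ max (c - s * p) (c - s * q) := by
    rw [div_mul_eq_mul_div, ← abs_mul]
    rcases abs_cases ((p - q) * s) with ⟨h, _⟩ | ⟨h, _⟩ <;> rw [h]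
    · exact le_max_of_le_right (by linarith)
    · exact le_max_of_le_left (by linarith)
  exact hmax.trans (max_le (le_csSup hbdd ⟨p, hp, rfl⟩) (le_csSup hbdd ⟨q, hq, rfl⟩))

lemma sSup_image_sub_mul {I : Set ℝ} (hI : IsCompact I) (hne : I.Nonempty) (c s : ℝ) :
    sSup ((fun v => c - s * v) '' I) = max (c - s * sInf I) (c - s * sSup I) := by
  refine IsGreatest.csSup_eq ⟨?_, ?_⟩
  · rcases max_choice (c - s * sInf I) (c - s * sSup I) with h | h <;> rw [h]
    · exact ⟨_, hI.sInf_mem hne, rfl⟩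
    · exact ⟨_, hI.sSup_mem hne, rfl⟩
  · rintro _ ⟨v, hv, rfl⟩
    have hlo : sInf I ≤ v := csInf_le hI.bddBelow hv
    have hhi : v ≤ sSup I := le_csSup hI.bddAbove hv
    rcases le_total 0 s with hs | hs
    · exact le_max_of_le_left (by nlinarith)
    · exact le_max_of_le_right (by nlinarith)

section Probability

variable {Ω : Type*} [MeasurableSpace Ω] {μ : Measure Ω}

lemma indepFun_of_measurable_past {β γ : Type*} [MeasurableSpace β] [MeasurableSpace γ]
    {X : ℕ → Ω → β} (hmeas : ∀ t, Measurable (X t)) (hindep : iIndepFun X μ) (t : ℕ) {ψ : Ω → γ}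
    (hψ : Measurable[MeasurableSpace.comap (fun ω (s : Fin t) => X s ω) inferInstance] ψ) :
    IndepFun ψ (X t) μ := by
  have hpast : IndepFun (fun ω (s : Fin t) => X s ω) (X t) μ :=
    (hindep.indepFun_finset (range t) {t} (by simp) hmeas).comp
      (φ := fun (v : range t → β) (s : Fin t) => v ⟨s, mem_range.2 s.isLt⟩)
      (ψ := fun (v : ({t} : Finset ℕ) → β) => v ⟨t, mem_singleton_self t⟩)
      (by fun_prop) (by fun_prop)
  rw [IndepFun_iff_Indep] at hpast ⊢
  exact indep_of_indep_of_le_left hpast (measurable_iff_comap_le.mp hψ)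

lemma measurable_of_measurable_past {β γ : Type*} [MeasurableSpace β] [MeasurableSpace γ]
    {X : ℕ → Ω → β} (hmeas : ∀ t, Measurable (X t)) (t : ℕ) {ψ : Ω → γ}
    (hψ : Measurable[MeasurableSpace.comap (fun ω (s : Fin t) => X s ω) inferInstance] ψ) :
    Measurable ψ :=
  hψ.mono (measurable_iff_comap_le.mp (measurable_pi_lambda _ fun s => hmeas s)) le_rfl

variable [IsProbabilityMeasure μ]

namespace Rademacher

lemma ae_eq_one_or_eq_neg_one {X : Ω → ℝ} (hX : Measurable X)
    (hplus : μ {ω | X ω = 1} = 1 / 2) (hminus : μ {ω | X ω = -1} = 1 / 2) :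
    ∀ᵐ ω ∂μ, X ω = 1 ∨ X ω = -1 := by
  have hdisj : Disjoint {ω | X ω = 1} {ω | X ω = -1} :=
    Set.disjoint_left.2 fun ω (h1 : X ω = 1) (h2 : X ω = -1) => by rw [h1] at h2; norm_num at h2
  have hunion : μ ({ω | X ω = 1} ∪ {ω | X ω = -1}) = 1 := by
    rw [measure_union hdisj (hX (measurableSet_singleton _)), hplus, hminus, ENNReal.add_halves]
  exact ae_iff.2 ((prob_compl_eq_zero_iff
    ((hX (measurableSet_singleton _)).union (hX (measurableSet_singleton _)))).2 hunion)

lemma integrable {X : Ω → ℝ} (hX : Measurable X)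
    (hplus : μ {ω | X ω = 1} = 1 / 2) (hminus : μ {ω | X ω = -1} = 1 / 2) :
    Integrable X μ := by
  refine .of_bound hX.aestronglyMeasurable 1 ?_
  filter_upwards [ae_eq_one_or_eq_neg_one hX hplus hminus] with ω hω
  rcases hω with h | h <;> simp [h]

lemma integral_eq_zero {X : Ω → ℝ} (hX : Measurable X)
    (hplus : μ {ω | X ω = 1} = 1 / 2) (hminus : μ {ω | X ω = -1} = 1 / 2) :
    ∫ ω, X ω ∂μ = 0 := by
  have hs : MeasurableSet {ω | X ω = 1} := hX (measurableSet_singleton 1)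
  have hae : X =ᵐ[μ] fun ω => {ω | X ω = 1}.indicator (fun _ => (2 : ℝ)) ω - 1 := by
    filter_upwards [ae_eq_one_or_eq_neg_one hX hplus hminus] with ω hω
    rcases hω with h | h <;> simp [Set.indicator, h] <;> norm_num
  rw [integral_congr_ae hae, integral_sub ((integrable_const 2).indicator hs) (integrable_const 1),
    integral_indicator_const 2 hs, measureReal_def, hplus]
  norm_num

variable {Z : ℕ → Ω → ℝ}

lemma measure_preimage_signs (hmeas : ∀ t, Measurable (Z t)) (hindep : iIndepFun Z μ)
    (hplus : ∀ t, μ {ω | Z t ω = 1} = 1 / 2) (T : ℕ) (η : Fin T → Bool) :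
    μ ((fun ω (t : Fin T) => decide (Z t ω = 1)) ⁻¹' {η}) = (2 ^ T)⁻¹ := by
  have hB : iIndepFun (fun (t : Fin T) ω => decide (Z t ω = 1)) μ :=
    (hindep.precomp Fin.val_injective).comp (fun _ x => decide (x = 1))
      fun _ => measurable_to_bool (by convert measurableSet_singleton (1 : ℝ); ext; simp)
  have hpre : (fun ω (t : Fin T) => decide (Z t ω = 1)) ⁻¹' {η}
      = ⋂ t : Fin T, (fun ω => decide (Z t ω = 1)) ⁻¹' {η t} := by
    ext ω; simp [funext_iff]
  have hfactor : ∀ t : Fin T, μ ((fun ω => decide (Z t ω = 1)) ⁻¹' {η t}) = 2⁻¹ := by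
    intro t
    have hs : MeasurableSet {ω | Z t ω = 1} := hmeas t (measurableSet_singleton 1)
    cases η t
    · convert prob_compl_eq_one_sub (μ := μ) hs using 2
      · ext; simp
      · simp [hplus, ENNReal.one_sub_inv_two]
    · convert hplus t using 2
      · ext; simp
      · simp
  rw [hpre, hB.meas_iInter fun t => ⟨{η t}, measurableSet_singleton _, rfl⟩]
  simp [hfactor, ENNReal.inv_pow]

open BooleanCube in
lemma integral_comp_sum_mul_eq_average (hmeas : ∀ t, Measurable (Z t)) (hindep : iIndepFun Z μ)
    (hplus : ∀ t, μ {ω | Z t ω = 1} = 1 / 2) (hminus : ∀ t, μ {ω | Z t ω = -1} = 1 / 2)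
    (T : ℕ) (a : ℕ → ℝ) (φ : ℝ → ℝ) :
    ∫ ω, φ (∑ t ∈ range T, Z t ω * a t) ∂μ
      = (2 ^ T)⁻¹ * ∑ η : Fin T → Bool, φ (signedSum (fun t : Fin T => a t) η) := by
  have hsigns : Measurable fun ω (t : Fin T) => decide (Z t ω = 1) := measurable_pi_lambda _
    fun t => measurable_to_bool (by convert hmeas t (measurableSet_singleton (1 : ℝ)); ext; simp)
  have hae : (fun ω => φ (∑ t ∈ range T, Z t ω * a t))
      =ᵐ[μ] fun ω => φ (signedSum (fun t : Fin T => a t) (fun t => decide (Z t ω = 1))) := by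
    filter_upwards [ae_all_iff.2 fun t => ae_eq_one_or_eq_neg_one (hmeas t) (hplus t) (hminus t)]
      with ω hω
    simp only [signedSum, ← Fin.sum_univ_eq_sum_range (fun t => Z t ω * a t)]
    congr 1
    refine sum_congr rfl fun t _ => ?_
    rcases hω t with h | h <;> norm_num [h]
  rw [integral_congr_ae hae, ← integral_map (f := fun η => φ (signedSum (fun t : Fin T => a t) η))
    hsigns.aemeasurable Measurable.of_discrete.aestronglyMeasurable, integral_fintype .of_finite]
  simp [Measure.real, Measure.map_apply hsigns (measurableSet_singleton _),
    measure_preimage_signs hmeas hindep hplus, mul_sum]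

theorem sum_sq_le_two_mul_sq_integral_abs (hmeas : ∀ t, Measurable (Z t)) (hindep : iIndepFun Z μ)
    (hplus : ∀ t, μ {ω | Z t ω = 1} = 1 / 2) (hminus : ∀ t, μ {ω | Z t ω = -1} = 1 / 2)
    (T : ℕ) (a : ℕ → ℝ) :
    ∑ t ∈ range T, a t ^ 2 ≤ 2 * (∫ ω, |∑ t ∈ range T, Z t ω * a t| ∂μ) ^ 2 := by
  have h := BooleanCube.khinchin (fun t : Fin T => a t)
  rw [Fintype.card_fin, Fin.sum_univ_eq_sum_range (fun t => a t ^ 2)] at h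
  rw [integral_comp_sum_mul_eq_average hmeas hindep hplus hminus T a abs]
  field_simp
  linarith

lemma integrable_mul_of_bounded {X ψ : Ω → ℝ} (hX : Measurable X)
    (hplus : μ {ω | X ω = 1} = 1 / 2) (hminus : μ {ω | X ω = -1} = 1 / 2)
    (hψ : Measurable ψ) {B : ℝ} (hB : ∀ ω, |ψ ω| ≤ B) :
    Integrable (fun ω => X ω * ψ ω) μ :=
  (integrable hX hplus hminus).mul_bdd hψ.aestronglyMeasurable (.of_forall hB)

lemma integral_mul_eq_zero_of_measurable_past (hmeas : ∀ t, Measurable (Z t))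
    (hindep : iIndepFun Z μ)
    (hplus : ∀ t, μ {ω | Z t ω = 1} = 1 / 2) (hminus : ∀ t, μ {ω | Z t ω = -1} = 1 / 2)
    (t : ℕ) {ψ : Ω → ℝ}
    (hψ : Measurable[MeasurableSpace.comap (fun ω (s : Fin t) => Z s ω) inferInstance] ψ) :
    ∫ ω, Z t ω * ψ ω ∂μ = 0 := by
  rw [(indepFun_of_measurable_past hmeas hindep t hψ).symm.integral_fun_mul_eq_mul_integral
    (hmeas t).aestronglyMeasurable (measurable_of_measurable_past hmeas t hψ).aestronglyMeasurable,
    integral_eq_zero (hmeas t) (hplus t) (hminus t), zero_mul]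

lemma integrable_sum_mul_of_bounded (hmeas : ∀ t, Measurable (Z t))
    (hplus : ∀ t, μ {ω | Z t ω = 1} = 1 / 2) (hminus : ∀ t, μ {ω | Z t ω = -1} = 1 / 2)
    {ψ : ℕ → Ω → ℝ} (hψ : ∀ t, Measurable (ψ t)) (hbdd : ∀ t, ∃ B, ∀ ω, |ψ t ω| ≤ B) (T : ℕ) :
    Integrable (fun ω => ∑ t ∈ range T, Z t ω * ψ t ω) μ :=
  integrable_finsetSum _ fun t _ =>
    integrable_mul_of_bounded (hmeas t) (hplus t) (hminus t) (hψ t) (hbdd t).choose_spec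

lemma integral_sum_mul_eq_zero_of_measurable_past (hmeas : ∀ t, Measurable (Z t))
    (hindep : iIndepFun Z μ)
    (hplus : ∀ t, μ {ω | Z t ω = 1} = 1 / 2) (hminus : ∀ t, μ {ω | Z t ω = -1} = 1 / 2)
    {ψ : ℕ → Ω → ℝ}
    (hψ : ∀ t, Measurable[MeasurableSpace.comap (fun ω (s : Fin t) => Z s ω) inferInstance] (ψ t))
    (hbdd : ∀ t, ∃ B, ∀ ω, |ψ t ω| ≤ B) (T : ℕ) :
    ∫ ω, ∑ t ∈ range T, Z t ω * ψ t ω ∂μ = 0 := by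
  rw [integral_finsetSum _ fun t _ => integrable_mul_of_bounded (hmeas t) (hplus t) (hminus t)
    (measurable_of_measurable_past hmeas t (hψ t)) (hbdd t).choose_spec]
  exact sum_eq_zero fun t _ =>
    integral_mul_eq_zero_of_measurable_past hmeas hindep hplus hminus t (hψ t)

end Rademacher

end Probability

open Rademacher

lemma mul_integral_abs_le_integral_sSup_image_sub_mul {Ω : Type*} [MeasurableSpace Ω]
    {μ : Measure Ω} {c s : Ω → ℝ} (hc : Integrable c μ) (hs : Integrable s μ)
    (hc0 : ∫ ω, c ω ∂μ = 0) (hs0 : ∫ ω, s ω ∂μ = 0) {I : Set ℝ} (hI : IsCompact I) {p q : ℝ}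
    (hp : p ∈ I) (hq : q ∈ I) :
    |p - q| / 2 * ∫ ω, |s ω| ∂μ ≤ ∫ ω, sSup ((fun v => c ω - s ω * v) '' I) ∂μ := by
  have hsup : Integrable (fun ω => sSup ((fun v => c ω - s ω * v) '' I)) μ := by
    simp_rw [sSup_image_sub_mul hI ⟨p, hp⟩]
    exact (hc.sub (hs.mul_const _)).sup (hc.sub (hs.mul_const _))
  have hcentre : Integrable (fun ω => c ω - s ω * ((p + q) / 2)) μ := hc.sub (hs.mul_const _)
  have hspread : Integrable (fun ω => |p - q| / 2 * |s ω|) μ := hs.abs.const_mul _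
  calc |p - q| / 2 * ∫ ω, |s ω| ∂μ
      = ∫ ω, c ω - s ω * ((p + q) / 2) + |p - q| / 2 * |s ω| ∂μ := by
        rw [integral_add hcentre hspread, integral_sub hc (hs.mul_const _), integral_mul_const,
          integral_const_mul, hc0, hs0]
        ring
    _ ≤ ∫ ω, sSup ((fun v => c ω - s ω * v) '' I) ∂μ :=
        integral_mono (hcentre.add hspread) hsup fun ω => le_sSup_image_sub_mul hI hp hq (c ω) (s ω)

lemma div_sqrt_eight_mul_sqrt_le {D σ e : ℝ} (he : 0 ≤ e) (h : σ ≤ 2 * e ^ 2) :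
    D / √8 * √σ ≤ |D| / 2 * e := by
  have h8 : √8 = 2 * √2 := by
    rw [show (8 : ℝ) = 2 ^ 2 * 2 by norm_num, Real.sqrt_mul' _ (by norm_num),
      Real.sqrt_sq (by norm_num)]
  have hσ : √σ ≤ √2 * e := by
    rw [← Real.sqrt_sq he, ← Real.sqrt_mul (by norm_num)]
    exact Real.sqrt_le_sqrt h
  calc D / √8 * √σ ≤ |D| / √8 * √σ := by gcongr; exact le_abs_self D
    _ ≤ |D| / √8 * (√2 * e) := by gcongr
    _ = |D| / 2 * e := by rw [h8]; field_simp

theorem lower_bound_expected_regret_general {E : Type*} [NormedAddCommGroup E]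
    [NormedSpace ℝ E] [MeasurableSpace E] [BorelSpace E]
    {Ω : Type*} [MeasurableSpace Ω] (μ : Measure Ω) [IsProbabilityMeasure μ]
    (K : Set E) (hKcomp : IsCompact K)
    (D : ℝ)
    (ℓ : E →L[ℝ] ℝ)
    (x y : E) (hx : x ∈ K) (hy : y ∈ K) (hxy : ℓ x - ℓ y = D)
    (Z : ℕ → Ω → ℝ) (hmeas : ∀ t, Measurable (Z t))
    (hindep : ProbabilityTheory.iIndepFun Z μ)
    (hplus : ∀ t, μ {ω | Z t ω = 1} = 1 / 2)
    (hminus : ∀ t, μ {ω | Z t ω = -1} = 1 / 2)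
    (T : ℕ) (a : ℕ → ℝ)
    (w : ℕ → Ω → E) (hw : ∀ t ω, w t ω ∈ K)
    (hadapted : ∀ t,
      @Measurable Ω E (MeasurableSpace.comap (fun ω (s : Fin t) => Z s ω) inferInstance) _
        (w t)) :
    (D / Real.sqrt 8) * Real.sqrt (∑ t ∈ Finset.range T, (a t) ^ 2)
      ≤ ∫ ω, sSup ((fun u =>
            (∑ t ∈ Finset.range T, Z t ω * a t * ℓ (w t ω))
              - ∑ t ∈ Finset.range T, Z t ω * a t * ℓ u) '' K) ∂μ := by
  obtain ⟨B, hB⟩ := hKcomp.exists_bound_of_continuousOn ℓ.continuous.continuousOn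
  have hloss_past t : Measurable[MeasurableSpace.comap (fun ω (s : Fin t) => Z s ω) inferInstance]
      fun ω => a t * ℓ (w t ω) :=
    (measurable_const.mul ℓ.continuous.measurable).comp (hadapted t)
  have hloss_bdd t : ∃ B', ∀ ω, |a t * ℓ (w t ω)| ≤ B' :=
    ⟨|a t| * B, fun ω => by
      rw [abs_mul]; exact mul_le_mul_of_nonneg_left (hB _ (hw t ω)) (abs_nonneg _)⟩
  have hcoef_bdd t : ∃ B', ∀ _ : Ω, |a t| ≤ B' := ⟨|a t|, fun _ => le_rfl⟩
  have hregret ω : (fun u => (∑ t ∈ range T, Z t ω * a t * ℓ (w t ω))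
        - ∑ t ∈ range T, Z t ω * a t * ℓ u) '' K
      = (fun v => (∑ t ∈ range T, Z t ω * (a t * ℓ (w t ω)))
        - (∑ t ∈ range T, Z t ω * a t) * v) '' (ℓ '' K) := by
    simp only [Set.image_image, sum_mul, mul_assoc]
  simp_rw [hregret, ← hxy]
  refine (div_sqrt_eight_mul_sqrt_le (integral_nonneg fun _ => abs_nonneg _)
    (sum_sq_le_two_mul_sq_integral_abs hmeas hindep hplus hminus T a)).trans ?_
  exact mul_integral_abs_le_integral_sSup_image_sub_mul
    (integrable_sum_mul_of_bounded hmeas hplus hminus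
      (fun t => measurable_of_measurable_past hmeas t (hloss_past t)) hloss_bdd T)
    (integrable_sum_mul_of_bounded (ψ := fun t _ => a t) hmeas hplus hminus
      (fun _ => measurable_const) hcoef_bdd T)
    (integral_sum_mul_eq_zero_of_measurable_past hmeas hindep hplus hminus hloss_past hloss_bdd T)
    (integral_sum_mul_eq_zero_of_measurable_past (ψ := fun t _ => a t) hmeas hindep hplus hminus
      (fun _ => measurable_const) hcoef_bdd T)
    (hKcomp.image ℓ.continuous) ⟨x, hx, rfl⟩ ⟨y, hy, rfl⟩

/-- Lower-bound construction (Theorem 6): against losses `ℓ_t = Z_t a_t ℓ` with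
i.i.d. Rademacher signs `Z_t`, any algorithm whose decision `w_t` depends only on
the past signs `Z_0, …, Z_{t-1}` has expected regret at least
`(D/√8) √(∑ a_t²)`, where `D` is the diameter of `K`, witnessed by
`x, y ∈ K` with `⟨ℓ, x - y⟩ = D` and `‖ℓ‖_* = 1`. -/
theorem lower_bound_expected_regret {E : Type*} [NormedAddCommGroup E]
    [NormedSpace ℝ E] [MeasurableSpace E] [BorelSpace E]
    {Ω : Type*} [MeasurableSpace Ω] (μ : Measure Ω) [IsProbabilityMeasure μ]
    (K : Set E) (hKcomp : IsCompact K) (hKconv : Convex ℝ K) (hK : K.Nonempty)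
    (D : ℝ) (hD : D = Metric.diam K)
    (ℓ : E →L[ℝ] ℝ) (hℓ : ‖ℓ‖ = 1)
    (x y : E) (hx : x ∈ K) (hy : y ∈ K) (hxy : ℓ x - ℓ y = D)
    (Z : ℕ → Ω → ℝ) (hmeas : ∀ t, Measurable (Z t))
    (hindep : ProbabilityTheory.iIndepFun Z μ)
    (hplus : ∀ t, μ {ω | Z t ω = 1} = 1 / 2)
    (hminus : ∀ t, μ {ω | Z t ω = -1} = 1 / 2)
    (T : ℕ) (a : ℕ → ℝ) (ha : ∀ t, 0 ≤ a t)
    (w : ℕ → Ω → E) (hw : ∀ t ω, w t ω ∈ K)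
    (hadapted : ∀ t,
      @Measurable Ω E (MeasurableSpace.comap (fun ω (s : Fin t) => Z s ω) inferInstance) _
        (w t)) :
    (D / Real.sqrt 8) * Real.sqrt (∑ t ∈ Finset.range T, (a t) ^ 2)
      ≤ ∫ ω, sSup ((fun u =>
            (∑ t ∈ Finset.range T, Z t ω * a t * ℓ (w t ω))
              - ∑ t ∈ Finset.range T, Z t ω * a t * ℓ u) '' K) ∂μ :=
  lower_bound_expected_regret_general μ K hKcomp D ℓ x y hx hy hxy Z hmeas hindep hplus hminus T a w
    hw hadapted
end
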